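/- Let A be an n×n real symmetric arrow matrix with top-left diagonal block diag(γ_1,...,γ_{n-1}), with last row/column off-diagonal entries a_1,...,a_{n-1} and corner entry b, and let ν = e_n be the last standard basis vector. Let T_r be the r-th Newton transformation of A (T_0 = I, T_r = S_r(A) I - A T_{r-1}). Then ⟨T_r ν, ν⟩ = s_r(γ_1,...,γ_{n-1}) for every 1 ≤ r ≤ n-1, where s_r is the r-th elementary symmetric polynomial. -/

import Mathlib

open Finset Matrix

/-- The `r`-th elementary symmetric polynomial of the values of `x` on the index set `s`
(`s_0 = 1` by convention). -/
noncomputable def esymm {n : ℕ} (s : Finset (Fin n)) (r : ℕ) (x : Fin n → ℝ) : ℝ :=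
  ∑ t ∈ s.powersetCard r, ∏ i ∈ t, x i

/-- `S_r(A)`, the `r`-th elementary symmetric function of the eigenvalues of an `n × n`
matrix `A`, read off from the characteristic polynomial
`det(tI - A) = ∑_r (-1)^r S_r t^{n-r}`. -/
noncomputable def Smat {n : ℕ} (A : Matrix (Fin n) (Fin n) ℝ) (r : ℕ) : ℝ :=
  (-1) ^ r * A.charpoly.coeff (n - r)

/-- The Newton transformations of a matrix `A`: `T_0 = I`, `T_r = S_r(A) I - A T_{r-1}`. -/
noncomputable def newtonM {n : ℕ} (A : Matrix (Fin n) (Fin n) ℝ) :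
    ℕ → Matrix (Fin n) (Fin n) ℝ
  | 0 => 1
  | r + 1 => Smat A (r + 1) • 1 - A * newtonM A r

open Polynomial

lemma esymm_zero' {n : ℕ} (s : Finset (Fin n)) (x : Fin n → ℝ) : esymm s 0 x = 1 := by
  simp [esymm]

lemma esymm_insert' {n : ℕ} {s : Finset (Fin n)} {i : Fin n} (his : i ∉ s)
    (r : ℕ) (x : Fin n → ℝ) :
    esymm (insert i s) (r + 1) x = esymm s (r + 1) x + x i * esymm s r x := by
  rw [esymm, Finset.powersetCard_succ_insert his, Finset.sum_union]
  · congr 1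
    rw [Finset.sum_image, esymm, Finset.mul_sum]
    · refine Finset.sum_congr rfl fun t ht => ?_
      rw [Finset.prod_insert fun hit => his ((Finset.mem_powersetCard.mp ht).1 hit)]
    · intro t ht u hu htu
      have hit : i ∉ t := fun hh => his ((Finset.mem_powersetCard.mp ht).1 hh)
      have hiu : i ∉ u := fun hh => his ((Finset.mem_powersetCard.mp hu).1 hh)
      rw [← Finset.erase_insert hit, ← Finset.erase_insert hiu, htu]
  · rw [Finset.disjoint_right]
    intro t ht hts
    obtain ⟨u, hu, rfl⟩ := Finset.mem_image.mp ht
    exact his ((Finset.mem_powersetCard.mp hts).1 (Finset.mem_insert_self i u))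

lemma esymm_rec' {k : ℕ} (x : Fin k → ℝ) (i : Fin k) (r : ℕ) :
    esymm univ (r + 1) x =
      esymm (univ.erase i) (r + 1) x + x i * esymm (univ.erase i) r x := by
  conv_lhs => rw [show (univ : Finset (Fin k)) = insert i (univ.erase i) from
    (Finset.insert_erase (mem_univ i)).symm]
  exact esymm_insert' (notMem_erase _ _) r x

lemma prod_coeff' {n : ℕ} (s : Finset (Fin n)) (x : Fin n → ℝ) {r : ℕ} (h : r ≤ s.card) :
    (∏ i ∈ s, (X - C (x i))).coeff (s.card - r) = (-1) ^ r * esymm s r x := by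
  have hc : Multiset.card (s.val.map x) = s.card := by simp
  have h2 : s.card - r ≤ Multiset.card (s.val.map x) := by omega
  have := Multiset.prod_X_sub_C_coeff (s.val.map x) h2
  rw [hc] at this
  have h3 : s.card - (s.card - r) = r := by omega
  rw [h3] at this
  have h4 : (∏ i ∈ s, (X - C (x i))) = ((s.val.map x).map fun t => X - C t).prod := by
    rw [Multiset.map_map]
    rfl
  rw [h4, this, Finset.esymm_map_val]
  rfl

lemma charpoly_arrow (k : ℕ) (γ a : Fin k → ℝ) (b : ℝ)
    (A : Matrix (Fin (k + 1)) (Fin (k + 1)) ℝ)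
    (hdiag : ∀ i j : Fin k, A i.castSucc j.castSucc = if i = j then γ i else 0)
    (hcol : ∀ i : Fin k, A i.castSucc (Fin.last k) = a i)
    (hrow : ∀ i : Fin k, A (Fin.last k) i.castSucc = a i)
    (hcorner : A (Fin.last k) (Fin.last k) = b) :
    A.charpoly = (X - C b) * ∏ i, (X - C (γ i)) -
      ∑ i, C (a i) ^ 2 * ∏ j ∈ univ.erase i, (X - C (γ j)) := by
  classical
  have hlast : ∀ j : Fin 1, finSumFinEquiv (Sum.inr j : Fin k ⊕ Fin 1) = Fin.last k := by
    intro j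
    have : j = 0 := Subsingleton.elim _ _
    subst this
    ext
    simp [finSumFinEquiv]
  have hcast : ∀ i : Fin k, finSumFinEquiv (Sum.inl i : Fin k ⊕ Fin 1) = i.castSucc := by
    intro i; ext; simp [finSumFinEquiv]
  have hM : (charmatrix A).submatrix finSumFinEquiv finSumFinEquiv =
      fromBlocks (diagonal fun i => X - C (γ i)) (Matrix.of fun i _ => -C (a i))
        (Matrix.of fun _ j => -C (a j)) (Matrix.of fun (_ _ : Fin 1) => X - C b) := by
    ext p q
    cases p with
    | inl i =>
      cases q with
      | inl j =>
        simp only [submatrix_apply, hcast, fromBlocks_apply₁₁]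
        rcases eq_or_ne i j with rfl | hij
        · rw [charmatrix_apply_eq, hdiag, if_pos rfl, diagonal_apply_eq]
        · rw [charmatrix_apply_ne _ _ _ (by simpa using hij), hdiag, if_neg hij,
            diagonal_apply_ne _ hij, map_zero, neg_zero]
      | inr j =>
        simp only [submatrix_apply, hcast, hlast, fromBlocks_apply₁₂, of_apply]
        rw [charmatrix_apply_ne _ _ _ (Fin.castSucc_lt_last i).ne, hcol]
    | inr i =>
      cases q with
      | inl j =>
        simp only [submatrix_apply, hcast, hlast, fromBlocks_apply₂₁, of_apply]
        rw [charmatrix_apply_ne _ _ _ (Fin.castSucc_lt_last j).ne', hrow]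
      | inr j =>
        simp only [submatrix_apply, hlast, fromBlocks_apply₂₂, of_apply]
        rw [charmatrix_apply_eq, hcorner]
  have hdet : A.charpoly =
      (fromBlocks (diagonal fun i => X - C (γ i)) (Matrix.of fun i _ => -C (a i))
        (Matrix.of fun _ j => -C (a j)) (Matrix.of fun (_ _ : Fin 1) => X - C b)).det := by
    rw [Matrix.charpoly]
    rw [← Matrix.det_submatrix_equiv_self (finSumFinEquiv : Fin k ⊕ Fin 1 ≃ Fin (k+1))
      (charmatrix A)]
    rw [hM]
  rw [hdet]
  apply IsFractionRing.injective ℝ[X] (RatFunc ℝ)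
  set φ : ℝ[X] →+* RatFunc ℝ := algebraMap ℝ[X] (RatFunc ℝ) with hφ
  have hu : ∀ i : Fin k, φ (X - C (γ i)) ≠ 0 := fun i => by
    simp only [hφ, ne_eq, map_eq_zero_iff _ (IsFractionRing.injective ℝ[X] (RatFunc ℝ))]
    exact X_sub_C_ne_zero (γ i)
  rw [RingHom.map_det, RingHom.mapMatrix_apply, Matrix.fromBlocks_map]
  rw [show ((diagonal fun i => X - C (γ i)).map φ) = diagonal fun i => φ (X - C (γ i)) by
    rw [Matrix.diagonal_map (map_zero φ)]]
  have hdu : (diagonal fun i => φ (X - C (γ i))).det = ∏ i, φ (X - C (γ i)) :=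
    det_diagonal
  haveI : Invertible (diagonal fun i => φ (X - C (γ i))) := by
    apply Matrix.invertibleOfIsUnitDet
    rw [hdu]
    exact (Finset.prod_ne_zero_iff.mpr fun i _ => hu i).isUnit
  have hiD : ⅟(diagonal fun i => φ (X - C (γ i))) =
      diagonal fun i => (φ (X - C (γ i)))⁻¹ := by
    apply invOf_eq_right_inv
    rw [Matrix.diagonal_mul_diagonal]
    rw [show (fun i => φ (X - C (γ i)) * (φ (X - C (γ i)))⁻¹) = fun _ => 1 from
      funext fun i => mul_inv_cancel₀ (hu i)]
    exact Matrix.diagonal_one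
  rw [Matrix.det_fromBlocks₁₁, hdu, hiD, Matrix.det_fin_one]
  simp only [Matrix.sub_apply, Matrix.mul_apply, Matrix.diagonal_apply, Matrix.map_apply, of_apply,
    mul_ite, mul_zero, ite_mul, zero_mul, Finset.sum_ite_eq, Finset.sum_ite_eq',
    Finset.mem_univ, if_true]
  simp only [map_sub, _root_.map_mul, map_sum, map_prod, map_pow, map_neg]
  rw [mul_sub, Finset.mul_sum, mul_comm (∏ i, (φ X - φ (C (γ i)))) (φ X - φ (C b))]
  congr 1
  refine Finset.sum_congr rfl fun j _ => ?_
  rw [← Finset.mul_prod_erase univ _ (mem_univ j)]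
  have h1 : φ X - φ (C (γ j)) ≠ 0 := by rw [← map_sub]; exact hu j
  field_simp

lemma coeff_formula' {k : ℕ} (γ a : Fin k → ℝ) (b : ℝ) {r : ℕ} (h1 : 1 ≤ r) (h2 : r ≤ k) :
    ((X - C b) * ∏ i, (X - C (γ i)) -
        ∑ i, C (a i) ^ 2 * ∏ j ∈ univ.erase i, (X - C (γ j))).coeff (k + 1 - r) =
      (-1) ^ r * (esymm univ r γ + b * esymm univ (r - 1) γ -
        if 2 ≤ r then ∑ i, a i ^ 2 * esymm (univ.erase i) (r - 2) γ else 0) := by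
  have hcard : (univ : Finset (Fin k)).card = k := by simp
  have hP : ∀ m, m ≤ k → (∏ i, (X - C (γ i))).coeff (k - m) = (-1) ^ m * esymm univ m γ := by
    intro m hm
    have := prod_coeff' univ γ (r := m) (by omega)
    rwa [hcard] at this
  have hQ : ∀ i : Fin k, ∀ m, m ≤ k - 1 →
      (∏ j ∈ univ.erase i, (X - C (γ j))).coeff (k - 1 - m) =
        (-1) ^ m * esymm (univ.erase i) m γ := by
    intro i m hm
    have hce : (univ.erase i).card = k - 1 := by
      rw [Finset.card_erase_of_mem (mem_univ i), hcard]
    have := prod_coeff' (univ.erase i) γ (r := m) (by omega)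
    rwa [hce] at this
  have hkm : 1 ≤ k := le_trans h1 h2
  rw [coeff_sub, sub_mul, coeff_sub]
  rw [show k + 1 - r = (k - r) + 1 from by omega, coeff_X_mul, coeff_C_mul]
  rw [hP r h2]
  rw [show k - r + 1 = k - (r - 1) from by omega, hP (r - 1) (by omega)]
  rw [Polynomial.finset_sum_coeff]
  by_cases hr2 : 2 ≤ r
  · rw [if_pos hr2]
    have : ∀ i : Fin k,
        (C (a i) ^ 2 * ∏ j ∈ univ.erase i, (X - C (γ j))).coeff (k - (r - 1)) =
          (-1) ^ r * (a i ^ 2 * esymm (univ.erase i) (r - 2) γ) := by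
      intro i
      rw [← map_pow, coeff_C_mul, show k - (r - 1) = k - 1 - (r - 2) from by omega,
        hQ i (r - 2) (by omega)]
      rw [show (-1 : ℝ) ^ r = (-1) ^ (r - 2) from by
        have h := pow_add (-1 : ℝ) (r - 2) 2
        rw [show r - 2 + 2 = r from by omega] at h
        rw [h]; norm_num]
      ring
    rw [Finset.sum_congr rfl fun i _ => this i, ← Finset.mul_sum]
    rw [show (-1 : ℝ) ^ (r - 1) = -(-1) ^ r from by
      have h := pow_succ (-1 : ℝ) (r - 1)
      rw [show r - 1 + 1 = r from by omega] at h
      rw [h]; ring]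
    ring
  · rw [if_neg hr2]
    have hr1 : r = 1 := by omega
    subst hr1
    have : ∀ i : Fin k,
        (C (a i) ^ 2 * ∏ j ∈ univ.erase i, (X - C (γ j))).coeff (k - (1 - 1)) = 0 := by
      intro i
      rw [← map_pow, coeff_C_mul]
      have hmon : (∏ j ∈ univ.erase i, (X - C (γ j))).natDegree = k - 1 := by
        rw [Polynomial.natDegree_prod_of_monic _ _ fun j _ => monic_X_sub_C (γ j)]
        simp [Finset.card_erase_of_mem]
      rw [Polynomial.coeff_eq_zero_of_natDegree_lt (by omega), mul_zero]
    rw [Finset.sum_congr rfl fun i _ => this i, Finset.sum_const_zero]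
    norm_num
    ring

/-- For the `n × n` (`n = k+1`) real symmetric arrow matrix `A` with diagonal block
`diag(γ_1,...,γ_{n-1})`, last row/column entries `a_i`, corner `b`, and `ν = e_n` the last
standard basis vector, `⟨T_r ν, ν⟩ = s_r(γ_1,...,γ_{n-1})` for every `1 ≤ r ≤ n-1`. -/
theorem stmt_9 (k : ℕ) (γ a : Fin k → ℝ) (b : ℝ)
    (A : Matrix (Fin (k + 1)) (Fin (k + 1)) ℝ)
    (hdiag : ∀ i j : Fin k, A i.castSucc j.castSucc = if i = j then γ i else 0)
    (hcol : ∀ i : Fin k, A i.castSucc (Fin.last k) = a i)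
    (hrow : ∀ i : Fin k, A (Fin.last k) i.castSucc = a i)
    (hcorner : A (Fin.last k) (Fin.last k) = b) :
    ∀ r, 1 ≤ r → r ≤ k →
      dotProduct (newtonM A r *ᵥ Pi.single (Fin.last k) (1 : ℝ))
          (Pi.single (Fin.last k) (1 : ℝ)) =
        esymm univ r γ := by
  classical
  have hch := charpoly_arrow k γ a b A hdiag hcol hrow hcorner
  have hS : ∀ r, 1 ≤ r → r ≤ k → Smat A r = esymm univ r γ + b * esymm univ (r - 1) γ -
      (if 2 ≤ r then ∑ i, a i ^ 2 * esymm (univ.erase i) (r - 2) γ else 0) := by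
    intro r hr1 hr2
    rw [Smat, hch, coeff_formula' γ a b hr1 hr2, ← mul_assoc,
      show ((-1 : ℝ) ^ r * (-1) ^ r) = 1 from by
        rw [← pow_add]
        exact Even.neg_one_pow ⟨r, rfl⟩,
      one_mul]
  have key : ∀ r, 1 ≤ r → r ≤ k →
      (newtonM A r *ᵥ Pi.single (Fin.last k) (1 : ℝ)) =
        Fin.lastCases (esymm univ r γ)
          (fun i => -(a i) * esymm (univ.erase i) (r - 1) γ) := by
    intro r
    induction r with
    | zero => omega
    | succ r ih =>
      intro _ hrk
      have hnew : newtonM A (r + 1) = Smat A (r + 1) • 1 - A * newtonM A r := rfl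
      rcases Nat.eq_zero_or_pos r with rfl | hr
      · -- base case r + 1 = 1
        rw [hnew, show newtonM A 0 = 1 from rfl, Matrix.mul_one, Matrix.sub_mulVec, Matrix.smul_mulVec,
          Matrix.one_mulVec, Matrix.mulVec_single_one]
        funext p
        induction p using Fin.lastCases with
        | last =>
          rw [Fin.lastCases_last, Pi.sub_apply, Pi.smul_apply, Matrix.col_apply,
            Pi.single_eq_same, hcorner, hS 1 le_rfl hrk]
          simp [esymm_zero']
        | cast i =>
          rw [Fin.lastCases_castSucc, Pi.sub_apply, Pi.smul_apply, Matrix.col_apply,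
            Pi.single_eq_of_ne (Fin.castSucc_lt_last i).ne, hcol]
          simp [esymm_zero']
      · obtain ⟨s, rfl⟩ : ∃ s, r = s + 1 := ⟨r - 1, by omega⟩
        have hv := ih (by omega) (by omega)
        rw [hnew, Matrix.sub_mulVec, Matrix.smul_mulVec, Matrix.one_mulVec,
          ← Matrix.mulVec_mulVec, hv]
        funext p
        have hmv : ∀ q : Fin (k + 1),
            (A *ᵥ (Fin.lastCases (esymm univ (s + 1) γ)
              (fun i => -(a i) * esymm (univ.erase i) (s + 1 - 1) γ) :
                Fin (k + 1) → ℝ)) q =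
            ∑ j : Fin k, A q j.castSucc * (-(a j) * esymm (univ.erase j) s γ) +
              A q (Fin.last k) * esymm univ (s + 1) γ := by
          intro q
          rw [Matrix.mulVec, dotProduct, Fin.sum_univ_castSucc]
          simp only [Fin.lastCases_castSucc, Fin.lastCases_last, Nat.add_sub_cancel]
        induction p using Fin.lastCases with
        | last =>
          rw [Pi.sub_apply, Pi.smul_apply, Pi.single_eq_same, smul_eq_mul, mul_one,
            hmv, Fin.lastCases_last, hcorner, hS (s + 2) (by omega) (by omega),
            if_pos (by omega)]
          have hsum : ∑ j : Fin k, A (Fin.last k) j.castSucc *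
              (-(a j) * esymm (univ.erase j) s γ) =
              -∑ j : Fin k, a j ^ 2 * esymm (univ.erase j) s γ := by
            rw [← Finset.sum_neg_distrib]
            exact Finset.sum_congr rfl fun j _ => by rw [hrow]; ring
          rw [hsum]
          have : (s + 2) - 1 = s + 1 := by omega
          rw [this]
          have : (s + 2) - 2 = s := by omega
          rw [this]
          ring
        | cast i =>
          rw [Pi.sub_apply, Pi.smul_apply, Pi.single_eq_of_ne (Fin.castSucc_lt_last i).ne,
            smul_eq_mul, mul_zero, hmv, Fin.lastCases_castSucc, hcol]
          have hsum : ∑ j : Fin k, A i.castSucc j.castSucc *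
              (-(a j) * esymm (univ.erase j) s γ) =
              γ i * (-(a i) * esymm (univ.erase i) s γ) := by
            rw [Finset.sum_congr rfl fun j _ => by rw [hdiag]]
            simp [ite_mul]
          rw [hsum]
          have h1 : (s + 1 + 1) - 1 = s + 1 := by omega
          rw [h1, esymm_rec' γ i s]
          ring
  intro r hr1 hr2
  rw [key r hr1 hr2, dotProduct_single, Fin.lastCases_last, mul_one]
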